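/- Any occurrence of the word w_{n+1} l_n = w_n l_n w_n l_n in ξ is immediately followed and immediately preceded by the same word of length 2^{n+1}, which is either w_n l_n w_n l_{n+1} or w_n l_{n+1} w_n l_n. -/

import Mathlib

/-!
The fixed point has a closed form: its `q`-th letter depends only on the `2`-adic valuation of
`q`; it is `a` for odd `q` and `σᵏ(c)` when `2 ^ (k + 1)` exactly divides `q`, and `σᵏ(c)`
only depends on `k mod 3`. An occurrence of `w_{n+1} l_n` after position `s` agrees with a
prefix of `ξ` except in its last letter. Comparing the letters at positions `s + 2 ^ j` forces
`s = 2ⁿ u` with `u ≡ 6` or `7 (mod 8)`, and the valuations of `u - 1, u, u + 3, u + 4` then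
determine the two neighbouring blocks `w_n x w_n y`.
-/

inductive A : Type
  | a | b | c | d
deriving DecidableEq

def subst : A → List A
  | A.a => [A.a, A.c, A.a]
  | A.b => [A.d]
  | A.c => [A.b]
  | A.d => [A.c]

def substW (u : List A) : List A := u.flatMap subst

def wrd (n : ℕ) : List A := substW^[n - 1] [A.a]

def ltr (n : ℕ) : List A := substW^[n - 1] [A.c]

def seg (ξ : ℕ → A) (s m : ℕ) : List A := (List.range m).map fun i => ξ (s + 1 + i)

def IsFixed (ξ : ℕ → A) : Prop :=
  ∀ N : ℕ, seg ξ 0 ((substW (seg ξ 0 N)).length) = substW (seg ξ 0 N)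

def ltrLetter (k : ℕ) : A :=
  match k % 3 with
  | 0 => A.c
  | 1 => A.b
  | _ => A.d

lemma ltrLetter_eq_iff {x y : ℕ} : ltrLetter x = ltrLetter y ↔ x % 3 = y % 3 := by
  unfold ltrLetter
  constructor
  · intro h
    rcases (by omega : x % 3 = 0 ∨ x % 3 = 1 ∨ x % 3 = 2) with hx | hx | hx <;>
      rcases (by omega : y % 3 = 0 ∨ y % 3 = 1 ∨ y % 3 = 2) with hy | hy | hy <;>
        simp_all
  · intro h
    rw [h]

lemma ltrLetter_ne_a (k : ℕ) : ltrLetter k ≠ A.a := by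
  unfold ltrLetter
  split <;> simp

lemma substW_append (u v : List A) : substW (u ++ v) = substW u ++ substW v :=
  List.flatMap_append

lemma substW_iterate_append (n : ℕ) (u v : List A) :
    substW^[n] (u ++ v) = substW^[n] u ++ substW^[n] v := by
  induction n generalizing u v with
  | zero => rfl
  | succ n ih => rw [Function.iterate_succ_apply, substW_append, ih]; rfl

lemma substW_ltrLetter (k : ℕ) : substW [ltrLetter k] = [ltrLetter (k + 1)] := by
  rcases (by omega : k % 3 = 0 ∨ k % 3 = 1 ∨ k % 3 = 2) with hk | hk | hk <;>
    simp [ltrLetter, hk, show (k + 1) % 3 = (k % 3 + 1) % 3 by omega, substW, subst]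

lemma ltr_succ (k : ℕ) : ltr (k + 1) = [ltrLetter k] := by
  induction k with
  | zero => rfl
  | succ k ih =>
    rw [← substW_ltrLetter, ← ih]
    exact Function.iterate_succ_apply' substW k [A.c]

lemma substW_wrd (n : ℕ) : substW (wrd (n + 1)) = wrd (n + 2) :=
  (Function.iterate_succ_apply' substW n [A.a]).symm

lemma wrd_add_two (n : ℕ) : wrd (n + 2) = wrd (n + 1) ++ ltr (n + 1) ++ wrd (n + 1) := by
  show substW^[n] (substW [A.a]) = _
  rw [show substW [A.a] = [A.a] ++ [A.c] ++ [A.a] from rfl, substW_iterate_append,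
    substW_iterate_append]
  rfl

lemma wrd_length (n : ℕ) : (wrd (n + 1)).length = 2 ^ (n + 1) - 1 := by
  induction n with
  | zero => rfl
  | succ n ih =>
    rw [wrd_add_two, ltr_succ]
    simp only [List.length_append, ih, List.length_singleton]
    have : 1 ≤ 2 ^ (n + 1) := Nat.one_le_two_pow
    rw [pow_succ 2 (n + 1)]
    omega

lemma seg_add (f : ℕ → A) (s m k : ℕ) : seg f s (m + k) = seg f s m ++ seg f (s + m) k := by
  simp only [seg, List.range_add, List.map_append, List.map_map]
  congr 2
  ext i
  simp only [Function.comp_apply]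
  congr 1
  omega

lemma seg_succ (f : ℕ → A) (s m : ℕ) : seg f s (m + 1) = seg f s m ++ [f (s + m + 1)] := by
  rw [seg_add]
  simp [seg]

lemma seg_eq_seg_iff {f g : ℕ → A} {s t m : ℕ} :
    seg f s m = seg g t m ↔ ∀ i < m, f (s + 1 + i) = g (t + 1 + i) := by
  simp [seg, List.map_inj_left]

lemma padicValNat_add_of_lt {p a b : ℕ} [Fact p.Prime] (ha : a ≠ 0)
    (h : padicValNat p a < padicValNat p b) : padicValNat p (a + b) = padicValNat p a := by
  have hb : b ≠ 0 := by rintro rfl; simp at h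
  have := padicValRat.add_eq_of_lt (p := p) (q := a) (r := b) (by positivity)
    (by exact_mod_cast ha) (by exact_mod_cast hb) (by simpa [padicValRat.of_nat] using h)
  rw [← Nat.cast_add, padicValRat.of_nat] at this
  exact_mod_cast this

def valLetter : ℕ → A
  | 0 => A.a
  | k + 1 => ltrLetter k

lemma valLetter_succ_ne (k : ℕ) : valLetter (k + 1) ≠ valLetter k := by
  cases k with
  | zero => exact ltrLetter_ne_a 0
  | succ k => simp [valLetter, ltrLetter_eq_iff]; omega

-- The closed form of `ξ q`, positions counted from `1`.
def xiLetter (q : ℕ) : A := valLetter (padicValNat 2 q)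

lemma xiLetter_two_pow_mul (k : ℕ) {m : ℕ} (hm : m ≠ 0) :
    xiLetter (2 ^ (k + 1) * m) = ltrLetter (k + padicValNat 2 m) := by
  rw [xiLetter, padicValNat.mul (by positivity) hm, padicValNat.prime_pow,
    show k + 1 + padicValNat 2 m = k + padicValNat 2 m + 1 by omega]
  rfl

lemma xiLetter_add_of_dvd {k s i : ℕ} (hs : 2 ^ k ∣ s) (hi : i ≠ 0) (hik : i < 2 ^ k) :
    xiLetter (s + i) = xiLetter i := by
  rcases eq_or_ne s 0 with rfl | hs0
  · rw [zero_add]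
  have hlt : padicValNat 2 i < padicValNat 2 s := by
    have hik' : ¬ 2 ^ k ∣ i := Nat.not_dvd_of_pos_of_lt (Nat.pos_of_ne_zero hi) hik
    rw [padicValNat_dvd_iff_le hs0] at hs
    rw [padicValNat_dvd_iff_le hi] at hik'
    omega
  rw [xiLetter, add_comm, padicValNat_add_of_lt hi hlt, xiLetter]

lemma seg_xiLetter_of_dvd {k s : ℕ} (hs : 2 ^ k ∣ s) :
    seg xiLetter s (2 ^ k - 1) = seg xiLetter 0 (2 ^ k - 1) := by
  rw [seg_eq_seg_iff]
  intro i hi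
  rw [add_assoc, zero_add, xiLetter_add_of_dvd hs (by omega) (by omega)]

lemma seg_xiLetter_two_pow_mul (k b : ℕ) :
    seg xiLetter (2 ^ k * b) (2 ^ k) =
      seg xiLetter 0 (2 ^ k - 1) ++ [xiLetter (2 ^ k * (b + 1))] := by
  have hk : 1 ≤ 2 ^ k := Nat.one_le_two_pow
  rw [← Nat.sub_add_cancel hk, seg_succ, Nat.sub_add_cancel hk,
    seg_xiLetter_of_dvd (dvd_mul_right _ _), mul_add, mul_one]
  congr 3
  omega

lemma xiLetter_two_pow (k : ℕ) : xiLetter (2 ^ (k + 1)) = ltrLetter k := by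
  simpa using xiLetter_two_pow_mul k one_ne_zero

lemma wrd_eq_seg_xiLetter (n : ℕ) : wrd (n + 1) = seg xiLetter 0 (2 ^ (n + 1) - 1) := by
  induction n with
  | zero => simp [wrd, seg, xiLetter, valLetter]
  | succ n ih =>
    have hsplit : 2 ^ (n + 1 + 1) - 1 = 2 ^ (n + 1) + (2 ^ (n + 1) - 1) := by
      rw [pow_succ]; have := @Nat.one_le_two_pow (n + 1); omega
    have hfirst := seg_xiLetter_two_pow_mul (n + 1) 0
    rw [mul_zero, zero_add, mul_one, xiLetter_two_pow] at hfirst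
    rw [wrd_add_two, ltr_succ, hsplit, seg_add, zero_add, hfirst,
      seg_xiLetter_of_dvd (dvd_refl _), ← ih]

namespace IsFixed

variable {ξ : ℕ → A}

lemma apply_one (hξ : IsFixed ξ) : ξ 1 = A.a := by
  have h := hξ 1
  have h1 : seg ξ 0 1 = [ξ 1] := rfl
  rw [h1] at h
  cases hx : ξ 1 <;> simp_all [seg, substW, subst]

lemma seg_zero_eq_wrd (hξ : IsFixed ξ) (n : ℕ) : seg ξ 0 (2 ^ (n + 1) - 1) = wrd (n + 1) := by
  induction n with
  | zero => simp [seg, hξ.apply_one, wrd]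
  | succ n ih =>
    have h := hξ (2 ^ (n + 1) - 1)
    rwa [ih, substW_wrd, wrd_length] at h

lemma eq_xiLetter (hξ : IsFixed ξ) {q : ℕ} (hq : 1 ≤ q) : ξ q = xiLetter q := by
  obtain ⟨n, rfl⟩ : ∃ n, q = n + 1 := ⟨q - 1, by omega⟩
  have h := (hξ.seg_zero_eq_wrd n).trans (wrd_eq_seg_xiLetter n)
  rw [seg_eq_seg_iff] at h
  simpa [add_comm] using h n (by have := Nat.lt_two_pow_self (n := n + 1); omega)

lemma seg_eq_seg_xiLetter (hξ : IsFixed ξ) (s m : ℕ) : seg ξ s m = seg xiLetter s m :=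
  seg_eq_seg_iff.mpr fun i _ ↦ hξ.eq_xiLetter (by omega)

end IsFixed

lemma padicValNat_two_eq_zero_of_odd {m : ℕ} (hm : m % 2 = 1) : padicValNat 2 m = 0 :=
  padicValNat.eq_zero_of_not_dvd (by omega)

lemma padicValNat_two_eq_one_of_mod_four {m : ℕ} (hm : m % 4 = 2) : padicValNat 2 m = 1 := by
  rw [show m = 2 * (m / 2) by omega, padicValNat.mul two_ne_zero (by omega),
    padicValNat.self one_lt_two, padicValNat_two_eq_zero_of_odd (by omega)]

lemma eight_dvd_of_padicValNat_mod_three {m : ℕ} (hm : m ≠ 0) (h2 : 2 ∣ m)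
    (h : padicValNat 2 m % 3 = 0) : 8 ∣ m := by
  have hpos : padicValNat 2 m ≠ 0 := (dvd_iff_padicValNat_ne_zero (p := 2) hm).mp h2
  exact (padicValNat_dvd_iff_le (p := 2) (n := 3) hm).mpr (by omega)

lemma mod_eight_of_padicValNat_mod_three {u : ℕ} (h1 : padicValNat 2 (u + 1) % 3 = 0)
    (h2 : padicValNat 2 (u + 2) % 3 = 0) : u % 8 = 6 ∨ u % 8 = 7 := by
  rcases Nat.mod_two_eq_zero_or_one u with hu | hu
  · have := eight_dvd_of_padicValNat_mod_three (by omega) (by omega) h2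
    omega
  · have := eight_dvd_of_padicValNat_mod_three (by omega) (by omega) h1
    omega

lemma xiLetter_add_of_seg_eq {p s : ℕ}
    (h : seg xiLetter s (2 ^ (p + 2)) = wrd (p + 2) ++ ltr (p + 1)) :
    (∀ i, i ≠ 0 → i < 2 ^ (p + 2) → xiLetter (s + i) = xiLetter i) ∧
      xiLetter (s + 2 ^ (p + 2)) = ltrLetter p := by
  obtain ⟨m, hm⟩ : ∃ m, 2 ^ (p + 2) = m + 1 :=
    ⟨_, (Nat.succ_pred_eq_of_pos (by positivity)).symm⟩
  rw [wrd_eq_seg_xiLetter (p + 1), ltr_succ, hm, Nat.add_sub_cancel, seg_succ] at h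
  obtain ⟨hseg, hlast⟩ := List.append_inj' h rfl
  rw [seg_eq_seg_iff] at hseg
  refine ⟨fun i hi0 hi ↦ ?_, ?_⟩
  · simpa [show s + 1 + (i - 1) = s + i by omega, show 1 + (i - 1) = i by omega]
      using hseg (i - 1) (by omega)
  · rw [hm, ← add_assoc]
    exact List.singleton_inj.mp hlast

lemma two_pow_dvd_of_xiLetter_add {k s : ℕ}
    (h : ∀ i, i ≠ 0 → i < 2 ^ (k + 1) → xiLetter (s + i) = xiLetter i) : 2 ^ k ∣ s := by
  -- If `v₂ s = j < k`, the shift by `2 ^ (j + 1)` lowers the valuation `j + 1` to `j`.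
  by_contra hdvd
  have hs0 : s ≠ 0 := by rintro rfl; exact hdvd (dvd_zero _)
  have hk : padicValNat 2 s < k := by rw [padicValNat_dvd_iff_le hs0] at hdvd; omega
  have hval : padicValNat 2 (s + 2 ^ (padicValNat 2 s + 1)) = padicValNat 2 s :=
    padicValNat_add_of_lt hs0 (by rw [padicValNat.prime_pow]; omega)
  have := h (2 ^ (padicValNat 2 s + 1)) (by positivity) (Nat.pow_lt_pow_right one_lt_two (by omega))
  rw [xiLetter, xiLetter, hval, padicValNat.prime_pow] at this
  exact valLetter_succ_ne _ this.symm

lemma exists_mod_eight_of_seg_eq {p s : ℕ}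
    (h : seg xiLetter s (2 ^ (p + 2)) = wrd (p + 2) ++ ltr (p + 1)) :
    ∃ u, s = 2 ^ (p + 1) * u ∧ (u % 8 = 6 ∨ u % 8 = 7) := by
  obtain ⟨hadd, hlast⟩ := xiLetter_add_of_seg_eq h
  obtain ⟨u, rfl⟩ := two_pow_dvd_of_xiLetter_add hadd
  refine ⟨u, rfl, mod_eight_of_padicValNat_mod_three ?_ ?_⟩
  · have h1 := hadd (2 ^ (p + 1)) (by positivity) (Nat.pow_lt_pow_right one_lt_two (by omega))
    rw [show 2 ^ (p + 1) * u + 2 ^ (p + 1) = 2 ^ (p + 1) * (u + 1) by ring,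
      xiLetter_two_pow_mul p (by omega), xiLetter_two_pow, ltrLetter_eq_iff] at h1
    omega
  · rw [show 2 ^ (p + 1) * u + 2 ^ (p + 2) = 2 ^ (p + 1) * (u + 2) by ring,
      xiLetter_two_pow_mul p (by omega), ltrLetter_eq_iff] at hlast
    omega

lemma seg_xiLetter_double_block (p b : ℕ) :
    seg xiLetter (2 ^ (p + 1) * b) (2 ^ (p + 2)) =
      wrd (p + 1) ++ [ltrLetter (p + padicValNat 2 (b + 1))] ++
        wrd (p + 1) ++ [ltrLetter (p + padicValNat 2 (b + 2))] := by
  rw [show 2 ^ (p + 2) = 2 ^ (p + 1) + 2 ^ (p + 1) by ring, seg_add,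
    show 2 ^ (p + 1) * b + 2 ^ (p + 1) = 2 ^ (p + 1) * (b + 1) by ring,
    seg_xiLetter_two_pow_mul, seg_xiLetter_two_pow_mul, ← wrd_eq_seg_xiLetter,
    xiLetter_two_pow_mul p (by omega), xiLetter_two_pow_mul p (by omega)]
  simp

lemma exists_neighbours_of_mod_eight {p u : ℕ} (hu : u % 8 = 6 ∨ u % 8 = 7) :
    ∃ w : List A,
      (w = wrd (p + 1) ++ ltr (p + 1) ++ wrd (p + 1) ++ ltr (p + 2) ∨
        w = wrd (p + 1) ++ ltr (p + 2) ++ wrd (p + 1) ++ ltr (p + 1)) ∧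
      seg xiLetter (2 ^ (p + 1) * (u + 2)) (2 ^ (p + 2)) = w ∧
      seg xiLetter (2 ^ (p + 1) * (u - 2)) (2 ^ (p + 2)) = w := by
  simp only [seg_xiLetter_double_block, ltr_succ, show u - 2 + 1 = u - 1 by omega,
    show u - 2 + 2 = u by omega, show u + 2 + 1 = u + 3 by omega, show u + 2 + 2 = u + 4 by omega]
  rcases hu with hu | hu
  · rw [padicValNat_two_eq_zero_of_odd (m := u + 3) (by omega),
      padicValNat_two_eq_one_of_mod_four (m := u + 4) (by omega),
      padicValNat_two_eq_zero_of_odd (m := u - 1) (by omega),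
      padicValNat_two_eq_one_of_mod_four (m := u) (by omega)]
    exact ⟨_, Or.inl rfl, rfl, rfl⟩
  · rw [padicValNat_two_eq_one_of_mod_four (m := u + 3) (by omega),
      padicValNat_two_eq_zero_of_odd (m := u + 4) (by omega),
      padicValNat_two_eq_one_of_mod_four (m := u - 1) (by omega),
      padicValNat_two_eq_zero_of_odd (m := u) (by omega)]
    exact ⟨_, Or.inr rfl, rfl, rfl⟩

theorem stmt11 (ξ : ℕ → A) (hξ : IsFixed ξ) :
    ∀ n : ℕ, 1 ≤ n → ∀ s : ℕ, seg ξ s (2 ^ (n + 1)) = wrd (n + 1) ++ ltr n →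
      ∃ u : List A,
        (u = wrd n ++ ltr n ++ wrd n ++ ltr (n + 1) ∨
         u = wrd n ++ ltr (n + 1) ++ wrd n ++ ltr n) ∧
        seg ξ (s + 2 ^ (n + 1)) (2 ^ (n + 1)) = u ∧
        2 ^ (n + 1) ≤ s ∧ seg ξ (s - 2 ^ (n + 1)) (2 ^ (n + 1)) = u := by
  intro n hn s hs
  obtain ⟨p, rfl⟩ : ∃ p, n = p + 1 := ⟨n - 1, by omega⟩
  rw [hξ.seg_eq_seg_xiLetter] at hs
  obtain ⟨u, rfl, hu⟩ := exists_mod_eight_of_seg_eq hs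
  obtain ⟨w, hw, hnext, hprev⟩ := exists_neighbours_of_mod_eight (p := p) hu
  have hpow : 2 ^ (p + 1 + 1) = 2 ^ (p + 1) * 2 := pow_succ 2 (p + 1)
  refine ⟨w, hw, ?_, ?_, ?_⟩
  · rwa [hξ.seg_eq_seg_xiLetter, hpow, ← mul_add]
  · rw [hpow]
    exact Nat.mul_le_mul_left _ (by omega)
  · rwa [hξ.seg_eq_seg_xiLetter, hpow, ← Nat.mul_sub]
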